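/- For every even natural number k ≥ 2 there exists a finite simple graph G with Δ(G) = k, χ(G) = k/2 + 1, vs_χ(G) = 1, and es_χ(G) = 2; in particular, the hypothesis χ(G) > Δ(G)/2 + 1 in the theorem asserting vs_χ(G) = es_χ(G) cannot be weakened to χ(G) ≥ Δ(G)/2 + 1. -/

import Mathlib

/-!
Take two copies of `K_{m+1}` glued at a vertex `c`, with `k = 2m`. The vertex `c` is adjacent to
everything, so `Δ = 2m`, and either clique forces `χ ≥ m + 1`. Deleting `c` leaves two disjoint
copies of `K_m`; deleting the two edges from `c` to one vertex of each clique lets `c` share that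
colour, so `m` colours suffice in both cases. The two cliques share no edge, so deleting a single
edge leaves one of them intact, whence `es_χ = 2`.
-/

open SimpleGraph

/-- The chromatic number of a graph, as a natural number (for finite graphs this
is the usual chromatic number). -/
noncomputable def chromNum {V : Type*} (G : SimpleGraph V) : ℕ :=
  sInf {n : ℕ | G.Colorable n}

/-- The maximum degree Δ(G) of a finite graph. -/
noncomputable def maxDeg {V : Type*} [Fintype V] (G : SimpleGraph V) : ℕ :=
  Finset.univ.sup fun v => Nat.card (G.neighborSet v)

/-- The chromatic vertex stability number: the minimum number of vertices whose
deletion results in a graph with chromatic number χ(G) − 1. -/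
noncomputable def vsChi {V : Type*} [Fintype V] (G : SimpleGraph V) : ℕ :=
  sInf {k : ℕ | ∃ S : Finset V, S.card = k ∧
    chromNum (G.induce ((S : Set V))ᶜ) = chromNum G - 1}

/-- The independent chromatic vertex stability number: the minimum size of an
independent set of vertices whose deletion results in a graph with chromatic
number χ(G) − 1. -/
noncomputable def ivsChi {V : Type*} [Fintype V] (G : SimpleGraph V) : ℕ :=
  sInf {k : ℕ | ∃ S : Finset V, S.card = k ∧
    (∀ u ∈ S, ∀ v ∈ S, ¬ G.Adj u v) ∧
    chromNum (G.induce ((S : Set V))ᶜ) = chromNum G - 1}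

/-- The chromatic edge stability number: the minimum number of edges whose
deletion results in a graph with chromatic number χ(G) − 1. -/
noncomputable def esChi {V : Type*} (G : SimpleGraph V) : ℕ :=
  sInf {k : ℕ | ∃ F : Finset (Sym2 V), ↑F ⊆ G.edgeSet ∧ F.card = k ∧
    chromNum (G.deleteEdges ↑F) = chromNum G - 1}


namespace SimpleGraph

variable {V : Type*} {G : SimpleGraph V} {n : ℕ}

lemma colorable_chromNum [Finite V] (G : SimpleGraph V) : G.Colorable (chromNum G) := by
  cases nonempty_fintype V
  exact Nat.sInf_mem (s := {n | G.Colorable n}) ⟨_, G.colorable_of_fintype⟩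

lemma chromNum_le_iff [Finite V] : chromNum G ≤ n ↔ G.Colorable n :=
  ⟨fun h => (colorable_chromNum G).mono h, fun h => Nat.sInf_le h⟩

lemma chromNum_eq_succ [Finite V] (h : G.Colorable (n + 1)) (h' : ¬ G.Colorable n) :
    chromNum G = n + 1 := by
  rw [← chromNum_le_iff] at h h'
  omega

lemma chromNum_induce_univ (G : SimpleGraph V) : chromNum (G.induce Set.univ) = chromNum G :=
  congrArg sInf <| Set.ext fun _ =>
    ⟨fun h => h.of_hom (induceUnivIso G).symm.toRelEmbedding.toRelHom,
      fun h => h.of_hom (induceUnivIso G).toRelEmbedding.toRelHom⟩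

lemma Colorable.succ_of_induce_compl_singleton {v : V} (h : (G.induce {v}ᶜ).Colorable n) :
    G.Colorable (n + 1) := by
  classical
  obtain ⟨c⟩ := h
  refine ⟨Coloring.mk (fun u => if hu : u = v then Fin.last n else (c ⟨u, hu⟩).castSucc) ?_⟩
  intro u w huw hc
  by_cases hu : u = v <;> by_cases hw : w = v <;> simp only [hu, hw, dite_true, dite_false] at hc
  · exact G.irrefl (hu ▸ hw ▸ huw)
  · exact (Fin.castSucc_lt_last _).ne hc.symm
  · exact (Fin.castSucc_lt_last _).ne hc
  · exact c.valid (v := ⟨u, hu⟩) (w := ⟨w, hw⟩) huw (Fin.castSucc_injective _ hc)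

lemma Colorable.induce_compl_of_deleteEdges {F : Set (Sym2 V)} {v : V} (hF : ∀ e ∈ F, v ∈ e)
    (h : (G.deleteEdges F).Colorable n) : (G.induce {v}ᶜ).Colorable n :=
  h.of_hom ⟨Subtype.val, fun {u w} huw => (deleteEdges_adj ..).2 ⟨huw, fun he => by
    rcases Sym2.mem_iff.1 (hF _ he) with h | h
    exacts [u.2 h.symm, w.2 h.symm]⟩⟩

/-- A single edge cannot lie in two cliques that share at most one vertex. -/
lemma not_colorable_deleteEdges_of_pairwise_adj {ι : Type*} [Finite ι] {f g : ι → V}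
    (hf : Pairwise fun i j => G.Adj (f i) (f j)) (hg : Pairwise fun i j => G.Adj (g i) (g j))
    (hfg : (Set.range f ∩ Set.range g).Subsingleton) (hn : n < Nat.card ι)
    {F : Set (Sym2 V)} (hF : F.Subsingleton) : ¬ (G.deleteEdges F).Colorable n := by
  have intact : ∀ h : ι → V, Pairwise (fun i j => G.Adj (h i) (h j)) →
      (∀ i j, i ≠ j → s(h i, h j) ∉ F) → ¬ (G.deleteEdges F).Colorable n :=
    fun h hh hF' hc =>
      (hc.card_le_of_pairwise_adj h fun i j hij =>
        (deleteEdges_adj ..).2 ⟨hh hij, hF' i j hij⟩).not_gt hn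
  rcases hF.eq_empty_or_singleton with rfl | ⟨e, rfl⟩
  · exact intact f hf fun _ _ _ => id
  induction e using Sym2.ind with
  | _ a b =>
  have avoids : ∀ h : ι → V, Pairwise (fun i j => G.Adj (h i) (h j)) →
      (a ∈ Set.range h → b ∈ Set.range h → a = b) →
      ∀ i j, i ≠ j → s(h i, h j) ∉ ({s(a, b)} : Set (Sym2 V)) := by
    rintro h hh hab i j hij he
    rw [Set.mem_singleton_iff, Sym2.eq_iff] at he
    have hne := (hh hij).ne
    rcases he with ⟨rfl, rfl⟩ | ⟨rfl, rfl⟩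
    · exact hne (hab ⟨i, rfl⟩ ⟨j, rfl⟩)
    · exact hne (hab ⟨j, rfl⟩ ⟨i, rfl⟩).symm
  by_cases hfab : a ∈ Set.range f ∧ b ∈ Set.range f
  · by_cases hgab : a ∈ Set.range g ∧ b ∈ Set.range g
    · exact intact f hf (avoids f hf fun _ _ => hfg ⟨hfab.1, hgab.1⟩ ⟨hfab.2, hgab.2⟩)
    · exact intact g hg (avoids g hg fun ha hb => (hgab ⟨ha, hb⟩).elim)
  · exact intact f hf (avoids f hf fun ha hb => (hfab ⟨ha, hb⟩).elim)

lemma vsChi_eq_one [Fintype V] (hG : chromNum G ≠ 0) {v : V}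
    (hv : chromNum (G.induce {v}ᶜ) = chromNum G - 1) : vsChi G = 1 := by
  refine IsLeast.csInf_eq
    ⟨⟨{v}, Finset.card_singleton v, by rwa [Finset.coe_singleton]⟩, ?_⟩
  rintro j ⟨S, rfl, hS⟩
  rw [Nat.one_le_iff_ne_zero, Ne, Finset.card_eq_zero]
  rintro rfl
  rw [Finset.coe_empty, Set.compl_empty, chromNum_induce_univ] at hS
  omega

lemma maxDeg_eq_of_isUniversal [Fintype V] {v : V} (hv : G.IsUniversal v) :
    maxDeg G = Fintype.card V - 1 := by
  classical
  have hdeg : ∀ w, Nat.card (G.neighborSet w) = G.degree w := fun w => by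
    rw [Nat.card_eq_fintype_card, card_neighborSet_eq_degree]
  refine le_antisymm (Finset.sup_le fun w _ => ?_) ?_
  · rw [hdeg]
    exact Nat.le_sub_one_of_lt (G.degree_lt_card_verts w)
  · calc Fintype.card V - 1 = Nat.card (G.neighborSet v) := by
          rw [hdeg, (G.degree_eq_card_sub_one v).2 hv]
      _ ≤ maxDeg G := Finset.le_sup (f := fun w => Nat.card (G.neighborSet w)) (Finset.mem_univ v)

end SimpleGraph

/-- Two copies of `K_{m+1}`, on the vertices `0, …, m` and `m, …, 2m`, glued at `m`. -/
def twoCliques (m : ℕ) : SimpleGraph (Fin (2 * m + 1)) where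
  Adj u v := u ≠ v ∧ (u.val ≤ m ∧ v.val ≤ m ∨ m ≤ u.val ∧ m ≤ v.val)
  symm := ⟨fun _ _ h => ⟨h.1.symm, h.2.imp And.symm And.symm⟩⟩
  loopless := ⟨fun _ h => h.1 rfl⟩

namespace twoCliques

variable {m : ℕ}

lemma adj_iff {u v : Fin (2 * m + 1)} :
    (twoCliques m).Adj u v ↔
      u.val ≠ v.val ∧ (u.val ≤ m ∧ v.val ≤ m ∨ m ≤ u.val ∧ m ≤ v.val) := by
  simp only [ne_eq, Fin.val_inj]
  rfl

lemma isUniversal : (twoCliques m).IsUniversal ⟨m, by omega⟩ := fun v hv => by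
  have : m ≠ v.val := Fin.val_ne_of_ne hv
  simp only [adj_iff]
  omega

lemma maxDeg_eq : maxDeg (twoCliques m) = 2 * m := by
  rw [maxDeg_eq_of_isUniversal isUniversal, Fintype.card_fin, Nat.add_sub_cancel]

lemma exists_cliques : ∃ f g : Fin (m + 1) → Fin (2 * m + 1),
    (Pairwise fun i j => (twoCliques m).Adj (f i) (f j)) ∧
    (Pairwise fun i j => (twoCliques m).Adj (g i) (g j)) ∧
    (Set.range f ∩ Set.range g).Subsingleton := by
  refine ⟨fun i => ⟨i, by omega⟩, fun i => ⟨m + i, by omega⟩, fun i j hij => ?_,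
    fun i j hij => ?_, ?_⟩
  · have := Fin.val_ne_of_ne hij
    simp only [adj_iff]
    omega
  · have := Fin.val_ne_of_ne hij
    simp only [adj_iff]
    omega
  · rintro _ ⟨⟨i, rfl⟩, ⟨j, hj⟩⟩ _ ⟨⟨i', rfl⟩, ⟨j', hj'⟩⟩
    rw [Fin.ext_iff] at hj hj' ⊢
    simp only at hj hj' ⊢
    omega

lemma not_colorable : ¬ (twoCliques m).Colorable m := fun h => by
  obtain ⟨f, -, hf, -⟩ := exists_cliques (m := m)
  simpa using h.card_le_of_pairwise_adj f hf

def cut (hm : 0 < m) : Finset (Sym2 (Fin (2 * m + 1))) :=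
  {s(⟨m, by omega⟩, 0), s(⟨m, by omega⟩, ⟨m + 1, by omega⟩)}

lemma mem_of_mem_cut (hm : 0 < m) {e : Sym2 (Fin (2 * m + 1))} (he : e ∈ cut hm) :
    ⟨m, by omega⟩ ∈ e := by
  simp only [cut, Finset.mem_insert, Finset.mem_singleton] at he
  rcases he with rfl | rfl <;> exact Sym2.mem_mk_left _ _

/-- The glued vertex `m` gets colour `0` by truncated subtraction, like `0` and `m + 1`: the two
edges of the cut are exactly its conflicts. -/
lemma colorable_deleteEdges_cut (hm : 0 < m) :
    ((twoCliques m).deleteEdges (cut hm)).Colorable m := by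
  refine ⟨Coloring.mk (fun v => ⟨if v.val < m then v.val else v.val - (m + 1),
    by split_ifs <;> omega⟩) ?_⟩
  intro u v huv hc
  rw [deleteEdges_adj, adj_iff] at huv
  simp only [cut, Finset.coe_insert, Finset.coe_singleton, Set.mem_insert_iff,
    Set.mem_singleton_iff, Sym2.eq_iff, Fin.ext_iff, Fin.val_zero] at huv
  rw [Fin.mk.injEq] at hc
  split_ifs at hc <;> omega

lemma colorable_induce_compl (hm : 0 < m) :
    ((twoCliques m).induce {⟨m, by omega⟩}ᶜ).Colorable m :=
  (colorable_deleteEdges_cut hm).induce_compl_of_deleteEdges fun _ => mem_of_mem_cut hm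

lemma chromNum_eq (hm : 0 < m) : chromNum (twoCliques m) = m + 1 :=
  chromNum_eq_succ (colorable_induce_compl hm).succ_of_induce_compl_singleton not_colorable

lemma chromNum_induce_compl (hm : 0 < m) :
    chromNum ((twoCliques m).induce {⟨m, by omega⟩}ᶜ) = m := by
  obtain ⟨n, rfl⟩ : ∃ n, m = n + 1 := ⟨m - 1, by omega⟩
  exact chromNum_eq_succ (colorable_induce_compl hm)
    fun h => not_colorable h.succ_of_induce_compl_singleton

lemma chromNum_deleteEdges_cut (hm : 0 < m) :
    chromNum ((twoCliques m).deleteEdges (cut hm)) = m := by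
  obtain ⟨n, rfl⟩ : ∃ n, m = n + 1 := ⟨m - 1, by omega⟩
  exact chromNum_eq_succ (colorable_deleteEdges_cut hm) fun h => not_colorable
    (h.induce_compl_of_deleteEdges fun _ => mem_of_mem_cut hm).succ_of_induce_compl_singleton

lemma vsChi_eq (hm : 0 < m) : vsChi (twoCliques m) = 1 :=
  vsChi_eq_one (by rw [chromNum_eq hm]; omega) (v := ⟨m, by omega⟩)
    (by rw [chromNum_induce_compl hm, chromNum_eq hm, Nat.add_sub_cancel])

lemma esChi_eq (hm : 0 < m) : esChi (twoCliques m) = 2 := by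
  classical
  refine IsLeast.csInf_eq ⟨⟨cut hm, ?_, Finset.card_pair (by simp [Fin.ext_iff]), ?_⟩, ?_⟩
  · simp [cut, Set.insert_subset_iff, adj_iff, hm.ne']
  · rw [chromNum_deleteEdges_cut hm, chromNum_eq hm, Nat.add_sub_cancel]
  · rintro j ⟨F, -, rfl, hF⟩
    by_contra! hlt
    obtain ⟨f, g, hf, hg, hfg⟩ := exists_cliques (m := m)
    refine not_colorable_deleteEdges_of_pairwise_adj (n := m) hf hg hfg (by simp)
      (fun _ ha _ hb => (Finset.card_le_one (s := F)).1 (by omega) _ ha _ hb) ?_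
    rw [← chromNum_le_iff, hF, chromNum_eq hm, Nat.add_sub_cancel]

end twoCliques

/-- For every even natural number $k ≥ 2$ there exists a finite simple graph
$G$ with $Δ(G) = k$, $χ(G) = k/2 + 1$, $vs_χ(G) = 1$, and $es_χ(G) = 2$. -/
theorem stmt_13 (k : ℕ) (hk : 2 ≤ k) (heven : Even k) :
    ∃ (n : ℕ) (G : SimpleGraph (Fin n)),
      maxDeg G = k ∧ 2 * chromNum G = k + 2 ∧
      vsChi G = 1 ∧ esChi G = 2 := by
  obtain ⟨m, rfl⟩ := heven
  have hm : 0 < m := by omega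
  refine ⟨2 * m + 1, twoCliques m, ?_, ?_, twoCliques.vsChi_eq hm, twoCliques.esChi_eq hm⟩
  · rw [twoCliques.maxDeg_eq, two_mul]
  · rw [twoCliques.chromNum_eq hm]
    ring
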